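/- If the image of L spans a one-dimensional subspace of D3, then there exists a unit vector w_1 ∈ D3 such that L(v_1, v_2) = √((1/2)λ1η)·⟨v_1, v_2⟩·w_1 for all v_1, v_2 ∈ D2. -/

import Mathlib

open scoped RealInnerProductSpace
open Module Submodule

noncomputable section

variable {V : Type*} [NormedAddCommGroup V] [InnerProductSpace ℝ V]

/-- The curvature-type operator built from `ε` and the difference tensor `K`:
`R(X,Y)Z = ε(⟨Y,Z⟩X − ⟨X,Z⟩Y) − K(X,K(Y,Z)) + K(Y,K(X,Z))`. -/
def Rc (ε : ℝ) (K : V →ₗ[ℝ] V →ₗ[ℝ] V) (X Y Z : V) : V :=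
  ε • (⟪Y, Z⟫ • X - ⟪X, Z⟫ • Y) - K X (K Y Z) + K Y (K X Z)

/-- The bilinear map `L(v₁,v₂) = K(v₁,v₂) − (λ₁/2)⟨v₁,v₂⟩ e₁`. -/
def Lop (lam1 : ℝ) (e1 : V) (K : V →ₗ[ℝ] V →ₗ[ℝ] V) (v1 v2 : V) : V :=
  K v1 v2 - (lam1 / 2 * ⟪v1, v2⟫) • e1

/-- The distribution `D₂ = {v : v ⟂ e₁, K(e₁,v) = (λ₁/2)v}`. -/
def D2s (lam1 : ℝ) (e1 : V) (K : V →ₗ[ℝ] V →ₗ[ℝ] V) : Submodule ℝ V :=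
  (ℝ ∙ e1)ᗮ ⊓ Module.End.eigenspace (K e1) (lam1 / 2)

/-- The distribution `D₃ = {w : w ⟂ e₁, K(e₁,w) = μw}`. -/
def D3s (mu : ℝ) (e1 : V) (K : V →ₗ[ℝ] V →ₗ[ℝ] V) : Submodule ℝ V :=
  (ℝ ∙ e1)ᗮ ⊓ Module.End.eigenspace (K e1) mu

/-- The operator `P_v(ṽ) = K(v, L(v,ṽ))`, as a linear endomorphism of `V`. -/
def Pop (lam1 : ℝ) (e1 : V) (K : V →ₗ[ℝ] V →ₗ[ℝ] V) (v : V) : V →ₗ[ℝ] V :=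
  (K v) ∘ₗ (K v - (lam1 / 2) •
    ((LinearMap.toSpanSingleton ℝ V e1) ∘ₗ (innerSL ℝ v).toLinearMap))

/-- The eigenspace `V_v(c)` of `P_v` within the orthogonal complement of `v` in `D₂`. -/
def Vvs (lam1 c : ℝ) (e1 : V) (K : V →ₗ[ℝ] V →ₗ[ℝ] V) (v : V) : Submodule ℝ V :=
  D2s lam1 e1 K ⊓ (ℝ ∙ v)ᗮ ⊓ Module.End.eigenspace (Pop lam1 e1 K v) c
/-!
Pairing the parallelism identity `R(e₁,v)K(v,v) = 2 K(R(e₁,v)v, v)` with `u ∈ D₂`, and using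
`R(e₁,v)u = η L(v,u) − η²⟨v,u⟩ e₁` (valid because `L(v,u) ∈ D₃`), gives
`⟨L(v,u), L(v,v)⟩ = (λ₁η/2)⟨v,u⟩⟨v,v⟩` on `D₂`. If the image of `L` is the line `ℝ w₀`, the
symmetric form `B = ⟨w₀, L(·,·)⟩` therefore satisfies `B(v,u) B(v,v) = c²⟨v,u⟩⟨v,v⟩` with
`c = √(λ₁η/2)`, so `B(v,·) = ±c⟨v,·⟩` for each `v`; evaluating `B` on a sum of two vectors of
opposite signs shows that the sign is global, and `w₁ = ±w₀`.
-/

lemma Submodule.exists_norm_eq_one_forall_eq_inner_smul {S : Submodule ℝ V}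
    (h : finrank ℝ S = 1) : ∃ w ∈ S, ‖w‖ = 1 ∧ ∀ x ∈ S, x = ⟪w, x⟫ • w := by
  obtain ⟨v, hv0, hv⟩ := finrank_eq_one_iff'.mp h
  have hv0' : (v : V) ≠ 0 := by simpa using hv0
  set w := ‖(v : V)‖⁻¹ • (v : V)
  have hw : ‖w‖ = 1 := norm_smul_inv_norm (𝕜 := ℝ) hv0'
  refine ⟨w, S.smul_mem _ v.2, hw, fun x hx => ?_⟩
  obtain ⟨t, ht⟩ := hv ⟨x, hx⟩
  have hxw : x = (t * ‖(v : V)‖) • w := by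
    rw [mul_smul, smul_inv_smul₀ (norm_ne_zero_iff.mpr hv0'), ← Submodule.coe_smul, ht]
  rw [hxw, real_inner_smul_right, real_inner_self_eq_norm_sq, hw, one_pow, mul_one]

namespace LinearMap.BilinForm

variable {B : LinearMap.BilinForm ℝ V} {c : ℝ}

lemma apply_eq_mul_inner_of_apply_self (hc : c ≠ 0) {s : ℝ} (hs : s ^ 2 = c ^ 2) {a b : V}
    (h : B a b * B a a = c ^ 2 * (⟪a, b⟫ * ⟪a, a⟫)) (haa : B a a = s * ⟪a, a⟫) :
    B a b = s * ⟪a, b⟫ := by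
  rcases eq_or_ne a 0 with rfl | ha
  · simp
  have hs0 : s ≠ 0 := by rintro rfl; exact hc (by simpa using hs.symm)
  refine mul_right_cancel₀ (mul_ne_zero hs0 (inner_self_ne_zero.mpr ha)) ?_
  linear_combination h - B a b * haa - ⟪a, b⟫ * ⟪a, a⟫ * hs

lemma eq_mul_inner_or_eq_neg_mul_inner (hB : ∀ a b, B a b = B b a) {D : Submodule ℝ V}
    (hc : c ≠ 0) (h : ∀ a ∈ D, ∀ b ∈ D, B a b * B a a = c ^ 2 * (⟪a, b⟫ * ⟪a, a⟫)) :
    (∀ a ∈ D, ∀ b ∈ D, B a b = c * ⟪a, b⟫) ∨ (∀ a ∈ D, ∀ b ∈ D, B a b = -c * ⟪a, b⟫) := by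
  have diag : ∀ a ∈ D, B a a = c * ⟪a, a⟫ ∨ B a a = -c * ⟪a, a⟫ := fun a ha => by
    rw [neg_mul, ← mul_self_eq_mul_self_iff]
    linear_combination h a ha a ha
  have row : ∀ s, s ^ 2 = c ^ 2 → ∀ a ∈ D, B a a = s * ⟪a, a⟫ → ∀ b ∈ D, B a b = s * ⟪a, b⟫ :=
    fun s hs a ha haa b hb => apply_eq_mul_inner_of_apply_self hc hs (h a ha b hb) haa
  by_cases hpos : ∀ a ∈ D, B a a = c * ⟪a, a⟫
  · exact .inl fun a ha => row c rfl a ha (hpos a ha)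
  by_cases hneg : ∀ a ∈ D, B a a = -c * ⟪a, a⟫
  · exact .inr fun a ha => row (-c) (neg_sq c) a ha (hneg a ha)
  push Not at hpos hneg
  obtain ⟨u, hu, hu'⟩ := hpos
  obtain ⟨v, hv, hv'⟩ := hneg
  have huu : B u u = -c * ⟪u, u⟫ := (diag u hu).resolve_left hu'
  have hvv : B v v = c * ⟪v, v⟫ := (diag v hv).resolve_right hv'
  have huv : B u v = -c * ⟪u, v⟫ := row (-c) (neg_sq c) u hu huu v hv
  have hvu : B v u = c * ⟪v, u⟫ := row c rfl v hv hvv u hu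
  have horth : ⟪u, v⟫ = 0 := by
    rw [hB, hvu, real_inner_comm] at huv
    exact (mul_eq_zero.mp (by linarith : 2 * c * ⟪u, v⟫ = 0)).resolve_left
      (mul_ne_zero two_ne_zero hc)
  -- on `u + v` the two signs would have to agree
  rcases diag (u + v) (D.add_mem hu hv) with hsum | hsum <;>
    simp only [map_add, LinearMap.add_apply, inner_add_left, inner_add_right, huu, hvv, huv, hvu,
      real_inner_comm u v, horth] at hsum
  · have huu0 : ⟪u, u⟫ = 0 := (mul_eq_zero.mp (by linarith : c * ⟪u, u⟫ = 0)).resolve_left hc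
    exact (hu' (by rw [huu, huu0, mul_zero, mul_zero])).elim
  · have hvv0 : ⟪v, v⟫ = 0 := (mul_eq_zero.mp (by linarith : c * ⟪v, v⟫ = 0)).resolve_left hc
    exact (hv' (by rw [hvv, hvv0, mul_zero, mul_zero])).elim

end LinearMap.BilinForm

lemma LinearMap.exists_eq_mul_inner_smul_of_inner_apply_apply_self (L : V →ₗ[ℝ] V →ₗ[ℝ] V)
    (hL : ∀ a b, L a b = L b a) {D : Submodule ℝ V} {w0 : V} (hw0 : ‖w0‖ = 1)
    (hrep : ∀ a ∈ D, ∀ b ∈ D, L a b = ⟪w0, L a b⟫ • w0) {c : ℝ} (hc : c ≠ 0)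
    (h : ∀ a ∈ D, ∀ b ∈ D, ⟪L a b, L a a⟫ = c ^ 2 * (⟪a, b⟫ * ⟪a, a⟫)) :
    ∃ w1, (w1 = w0 ∨ w1 = -w0) ∧ ∀ a ∈ D, ∀ b ∈ D, L a b = (c * ⟪a, b⟫) • w1 := by
  set B : LinearMap.BilinForm ℝ V := L.compr₂ (innerₗ V w0)
  have hB : ∀ a b, B a b = ⟪w0, L a b⟫ := fun _ _ => rfl
  have hBsymm : ∀ a b, B a b = B b a := fun a b => by rw [hB, hB, hL]
  have hBB : ∀ a ∈ D, ∀ b ∈ D, B a b * B a a = c ^ 2 * (⟪a, b⟫ * ⟪a, a⟫) := by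
    intro a ha b hb
    rw [← h a ha b hb, hrep a ha b hb, hrep a ha a ha, real_inner_smul_left,
      real_inner_smul_right, real_inner_self_eq_norm_sq, hw0, hB, hB]
    ring
  rcases B.eq_mul_inner_or_eq_neg_mul_inner hBsymm hc hBB with hpos | hneg
  · exact ⟨w0, .inl rfl, fun a ha b hb => by rw [hrep a ha b hb, ← hB, hpos a ha b hb]⟩
  · refine ⟨-w0, .inr rfl, fun a ha b hb => ?_⟩
    rw [hrep a ha b hb, ← hB, hneg a ha b hb, smul_neg, ← neg_smul, neg_mul]

section Centroaffine

variable {K : V →ₗ[ℝ] V →ₗ[ℝ] V} {ε lam1 mu η : ℝ} {e1 : V}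

lemma mem_D3s_iff {w : V} : w ∈ D3s mu e1 K ↔ ⟪e1, w⟫ = 0 ∧ K e1 w = mu • w := by
  rw [D3s, mem_inf, mem_orthogonal_singleton_iff_inner_right, Module.End.mem_eigenspace_iff]

lemma mem_D2s_iff {v : V} : v ∈ D2s lam1 e1 K ↔ ⟪e1, v⟫ = 0 ∧ K e1 v = (lam1 / 2) • v :=
  mem_D3s_iff

lemma K_e1_e1_eq_smul (hKcub : ∀ X Y Z : V, ⟪K X Y, Z⟫ = ⟪K X Z, Y⟫) (he1 : ⟪e1, e1⟫ = 1)
    (hlam1 : lam1 = ⟪K e1 e1, e1⟫) (hsplit : (ℝ ∙ e1) ⊔ D2s lam1 e1 K ⊔ D3s mu e1 K = ⊤) :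
    K e1 e1 = lam1 • e1 := by
  set x := K e1 e1 - lam1 • e1
  have hD : ∀ ν, D3s ν e1 K ≤ (ℝ ∙ x)ᗮ := fun ν w hw => by
    obtain ⟨hew, hKw⟩ := mem_D3s_iff.mp hw
    rw [mem_orthogonal_singleton_iff_inner_right, inner_sub_left, hKcub, hKw,
      real_inner_smul_left, real_inner_smul_left, real_inner_comm, hew, mul_zero, mul_zero,
      sub_zero]
  have he : (ℝ ∙ e1) ≤ (ℝ ∙ x)ᗮ := by
    rw [span_singleton_le_iff_mem, mem_orthogonal_singleton_iff_inner_right, inner_sub_left,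
      real_inner_smul_left, he1, ← hlam1, mul_one, sub_self]
  have htop : (ℝ ∙ x)ᗮ = ⊤ := top_unique (hsplit ▸ sup_le (sup_le he (hD _)) (hD _))
  rwa [orthogonal_eq_top_iff, span_singleton_eq_bot, sub_eq_zero] at htop

lemma inner_Rc_eq_neg_inner_Rc (hKcub : ∀ X Y Z : V, ⟪K X Y, Z⟫ = ⟪K X Z, Y⟫) (X Y Z W : V) :
    ⟪Rc ε K X Y Z, W⟫ = -⟪Rc ε K X Y W, Z⟫ := by
  simp only [Rc, inner_add_left, inner_sub_left, real_inner_smul_left]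
  rw [hKcub X (K Y Z) W, hKcub Y (K X Z) W, hKcub X (K Y W) Z, hKcub Y (K X W) Z,
    real_inner_comm (K X W), real_inner_comm (K Y W)]
  ring

lemma Rc_e1_eq_of_mem_D2s (hKe1 : K e1 e1 = lam1 • e1) (v : V) {u : V}
    (hu : u ∈ D2s lam1 e1 K) (hL : Lop lam1 e1 K v u ∈ D3s mu e1 K) :
    Rc ε K e1 v u =
      (lam1 / 2 - mu) • Lop lam1 e1 K v u - ((lam1 ^ 2 / 4 - ε) * ⟪v, u⟫) • e1 := by
  obtain ⟨heu, hKu⟩ := mem_D2s_iff.mp hu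
  have hKvu : K v u = Lop lam1 e1 K v u + (lam1 / 2 * ⟪v, u⟫) • e1 := by
    rw [Lop, sub_add_cancel]
  simp only [Rc]
  rw [heu, hKu, map_smul, hKvu, map_add, map_smul, (mem_D3s_iff.mp hL).2, hKe1]
  module

def Lopₗ (lam1 : ℝ) (e1 : V) (K : V →ₗ[ℝ] V →ₗ[ℝ] V) : V →ₗ[ℝ] V →ₗ[ℝ] V :=
  K - (lam1 / 2) • (innerₗ V).compr₂ (LinearMap.toSpanSingleton ℝ V e1)

@[simp]
lemma Lopₗ_apply (lam1 : ℝ) (e1 : V) (K : V →ₗ[ℝ] V →ₗ[ℝ] V) (a b : V) :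
    Lopₗ lam1 e1 K a b = Lop lam1 e1 K a b := by
  simp [Lopₗ, Lop, mul_smul]

lemma inner_Lop_Lop_self (hKsymm : ∀ X Y : V, K X Y = K Y X)
    (hKcub : ∀ X Y Z : V, ⟪K X Y, Z⟫ = ⟪K X Z, Y⟫)
    (hpar : ∀ X Y Z U : V, Rc ε K X Y (K Z U) = K (Rc ε K X Y Z) U + K Z (Rc ε K X Y U))
    (he1 : ⟪e1, e1⟫ = 1) (hKe1 : K e1 e1 = lam1 • e1)
    (hη0 : η ≠ 0) (hμη : mu = lam1 / 2 - η) (hη2 : η ^ 2 = lam1 ^ 2 / 4 - ε)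
    {v u : V} (hv : v ∈ D2s lam1 e1 K) (hu : u ∈ D2s lam1 e1 K)
    (hLvv : Lop lam1 e1 K v v ∈ D3s mu e1 K) (hLvu : Lop lam1 e1 K v u ∈ D3s mu e1 K) :
    ⟪Lop lam1 e1 K v u, Lop lam1 e1 K v v⟫ = lam1 * η / 2 * (⟪v, u⟫ * ⟪v, v⟫) := by
  have hRvu := Rc_e1_eq_of_mem_D2s (ε := ε) hKe1 v hu hLvu
  have hRvv := Rc_e1_eq_of_mem_D2s (ε := ε) hKe1 v hv hLvv
  rw [hμη, ← hη2, sub_sub_cancel] at hRvu hRvv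
  have hKvv : K v v = Lop lam1 e1 K v v + (lam1 / 2 * ⟪v, v⟫) • e1 := by
    rw [Lop, sub_add_cancel]
  have hKvu : K v u = Lop lam1 e1 K v u + (lam1 / 2 * ⟪v, u⟫) • e1 := by
    rw [Lop, sub_add_cancel]
  have heLvv := (mem_D3s_iff.mp hLvv).1
  have heLvu := (mem_D3s_iff.mp hLvu).1
  -- `hpar e1 v v v` paired with `u`: antisymmetry of `R` on the left, cubic symmetry on the right
  have h := congrArg (⟪·, u⟫) (hpar e1 v v v)
  rw [inner_Rc_eq_neg_inner_Rc hKcub, inner_add_left, hKsymm (Rc ε K e1 v v) v, hKcub v _ u,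
    hRvu, hRvv, hKvv, hKvu] at h
  simp only [inner_add_left, inner_add_right, inner_sub_left, inner_sub_right,
    real_inner_smul_left, real_inner_smul_right, heLvv, heLvu, real_inner_comm e1, he1] at h
  have h3 : η * (3 * (⟪Lop lam1 e1 K v u, Lop lam1 e1 K v v⟫
      - lam1 * η / 2 * (⟪v, u⟫ * ⟪v, v⟫))) = 0 := by
    linear_combination -h
  rw [mul_eq_zero, mul_eq_zero, sub_eq_zero] at h3
  exact (h3.resolve_left hη0).resolve_left three_ne_zero

end Centroaffine

theorem stmt_18_general {V : Type*} [NormedAddCommGroup V] [InnerProductSpace ℝ V]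
    (ε : ℝ)
    (K : V →ₗ[ℝ] V →ₗ[ℝ] V)
    (hKsymm : ∀ X Y : V, K X Y = K Y X)
    (hKcub : ∀ X Y Z : V, ⟪K X Y, Z⟫ = ⟪K X Z, Y⟫)
    (hpar : ∀ X Y Z U : V,
      Rc ε K X Y (K Z U) = K (Rc ε K X Y Z) U + K Z (Rc ε K X Y U))
    (e1 : V) (he1 : ‖e1‖ = 1)
    (lam1 η μ : ℝ)
    (hlam1 : lam1 = ⟪K e1 e1, e1⟫) (hlam1pos : 0 < lam1)
    (hdisc : 0 < lam1 ^ 2 - 4 * ε)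
    (hη : η = Real.sqrt (lam1 ^ 2 - 4 * ε) / 2)
    (hμ : μ = (lam1 - Real.sqrt (lam1 ^ 2 - 4 * ε)) / 2)
    (hsplit : (ℝ ∙ e1) ⊔ D2s lam1 e1 K ⊔ D3s μ e1 K = ⊤)
    (hLD3 : ∀ v1 ∈ D2s lam1 e1 K, ∀ v2 ∈ D2s lam1 e1 K,
      Lop lam1 e1 K v1 v2 ∈ D3s μ e1 K)
    (him : finrank ℝ (Submodule.span ℝ
      {w : V | ∃ v1 ∈ D2s lam1 e1 K, ∃ v2 ∈ D2s lam1 e1 K,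
        w = Lop lam1 e1 K v1 v2}) = 1) :
    ∃ w1 : V, ‖w1‖ = 1 ∧ w1 ∈ D3s μ e1 K ∧
      ∀ v1 ∈ D2s lam1 e1 K, ∀ v2 ∈ D2s lam1 e1 K,
        Lop lam1 e1 K v1 v2 = (Real.sqrt (lam1 * η / 2) * ⟪v1, v2⟫) • w1 := by
  have hηpos : 0 < η := hη ▸ half_pos (Real.sqrt_pos.mpr hdisc)
  have hμη : μ = lam1 / 2 - η := by rw [hμ, hη]; ring
  have hη2 : η ^ 2 = lam1 ^ 2 / 4 - ε := by rw [hη, div_pow, Real.sq_sqrt hdisc.le]; ring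
  have he1' : ⟪e1, e1⟫ = 1 := by rw [real_inner_self_eq_norm_sq, he1, one_pow]
  have hKe1 := K_e1_e1_eq_smul hKcub he1' hlam1 hsplit
  obtain ⟨w0, hw0S, hw0, hrep⟩ := Submodule.exists_norm_eq_one_forall_eq_inner_smul him
  have hw0D3 : w0 ∈ D3s μ e1 K := by
    refine span_le.mpr ?_ hw0S
    rintro _ ⟨a, ha, b, hb, rfl⟩
    exact hLD3 a ha b hb
  obtain ⟨w1, hw1, hL⟩ := (Lopₗ lam1 e1 K).exists_eq_mul_inner_smul_of_inner_apply_apply_self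
    (D := D2s lam1 e1 K) (c := Real.sqrt (lam1 * η / 2))
    (fun a b => by simp only [Lopₗ_apply, Lop, hKsymm a b, real_inner_comm a b]) hw0
    (fun a ha b hb => by simpa using hrep _ (subset_span ⟨a, ha, b, hb, rfl⟩))
    (by positivity)
    (fun a ha b hb => by
      rw [Lopₗ_apply, Lopₗ_apply, Real.sq_sqrt (by positivity)]
      exact inner_Lop_Lop_self hKsymm hKcub hpar he1' hKe1 hηpos.ne' hμη hη2 ha hb
        (hLD3 a ha a ha) (hLD3 a ha b hb))
  refine ⟨w1, ?_, ?_, fun a ha b hb => by simpa using hL a ha b hb⟩ <;>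
    rcases hw1 with rfl | rfl
  exacts [hw0, (norm_neg w0).trans hw0, hw0D3, neg_mem hw0D3]

/-- Lemma 7.1: if the image of `L` spans a one-dimensional subspace of `D₃`, then
there is a unit vector `w₁ ∈ D₃` with `L(v₁,v₂) = √(λ₁η/2)·⟨v₁,v₂⟩·w₁` on `D₂`. -/
theorem stmt_18 {V : Type*} [NormedAddCommGroup V] [InnerProductSpace ℝ V]
    (n m : ℕ) (hn : finrank ℝ V = n) (hn2 : 2 ≤ n)
    (ε : ℝ) (hε : ε = 1 ∨ ε = -1)
    (K : V →ₗ[ℝ] V →ₗ[ℝ] V)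
    (hKsymm : ∀ X Y : V, K X Y = K Y X)
    (hKcub : ∀ X Y Z : V, ⟪K X Y, Z⟫ = ⟪K X Z, Y⟫)
    (hpar : ∀ X Y Z U : V,
      Rc ε K X Y (K Z U) = K (Rc ε K X Y Z) U + K Z (Rc ε K X Y U))
    (e1 : V) (he1 : ‖e1‖ = 1)
    (lam1 η μ τ : ℝ)
    (hlam1 : lam1 = ⟪K e1 e1, e1⟫) (hlam1pos : 0 < lam1)
    (hmax : ∀ u : V, ‖u‖ = 1 → ⟪K u u, u⟫ ≤ lam1)
    (hdisc : 0 < lam1 ^ 2 - 4 * ε)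
    (hη : η = Real.sqrt (lam1 ^ 2 - 4 * ε) / 2)
    (hμ : μ = (lam1 - Real.sqrt (lam1 ^ 2 - 4 * ε)) / 2)
    (hτ : τ = η * (η + lam1 / 2) / 4)
    (hm2 : 2 ≤ m) (hmn : m ≤ n - 1)
    (hdimD2 : finrank ℝ (D2s lam1 e1 K) = m - 1)
    (hsplit : (ℝ ∙ e1) ⊔ D2s lam1 e1 K ⊔ D3s μ e1 K = ⊤)
    (hLD3 : ∀ v1 ∈ D2s lam1 e1 K, ∀ v2 ∈ D2s lam1 e1 K,
      Lop lam1 e1 K v1 v2 ∈ D3s μ e1 K)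
    (hKD2 : ∀ v ∈ D2s lam1 e1 K, ∀ w ∈ D3s μ e1 K, K v w ∈ D2s lam1 e1 K)
    (him : finrank ℝ (Submodule.span ℝ
      {w : V | ∃ v1 ∈ D2s lam1 e1 K, ∃ v2 ∈ D2s lam1 e1 K,
        w = Lop lam1 e1 K v1 v2}) = 1) :
    ∃ w1 : V, ‖w1‖ = 1 ∧ w1 ∈ D3s μ e1 K ∧
      ∀ v1 ∈ D2s lam1 e1 K, ∀ v2 ∈ D2s lam1 e1 K,
        Lop lam1 e1 K v1 v2 = (Real.sqrt (lam1 * η / 2) * ⟪v1, v2⟫) • w1 :=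
  stmt_18_general ε K hKsymm hKcub hpar e1 he1 lam1 η μ hlam1 hlam1pos hdisc hη hμ hsplit hLD3 him

end
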